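/- arXiv:1101.4413 — 2 statements merged into one kernel-verified Lean document; each statement's English description precedes it below -/
import Mathlib

section
/- For complex numbers z_1, …, z_E and n ≥ E, the sum over all tuples (n_1, …, n_E) of positive integers with n_1 + ⋯ + n_E = n of Π_{e=1}^E z_e^{n_e} equals m_{n−1}[z_1, …, z_E] · Π_{e=1}^E z_e, where m_{n−1}(z) = z^{n−1} and the bracket denotes the divided difference (assuming the z_e are pairwise distinct). -/
open Finset

/-- The divided difference of `f` at the points `z 0, …, z n`, defined by the
standard recursion. -/
noncomputable def dividedDiff {K : Type*} [Field K] (f : K → K) :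
    (n : ℕ) → (Fin (n + 1) → K) → K
  | 0, z => f (z 0)
  | n + 1, z =>
      (dividedDiff f n (fun i => z i.castSucc) - dividedDiff f n (fun i => z i.succ)) /
        (z 0 - z (Fin.last (n + 1)))

/-! Both sides equal `h_{n-E}(z_1, …, z_E) · ∏ z_e`, where `h_m` is the complete homogeneous
symmetric polynomial of degree `m`. On the left, lower every exponent by one. On the right,
expanding `h_{m+1}` in the first and in the last variable gives
`h_{m+1}(z_1, …, z_{E-1}) - h_{m+1}(z_2, …, z_E) = (z_1 - z_E) h_m(z_1, …, z_E)`, which is the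
divided-difference recursion; hence `m_p[z_1, …, z_E] = h_{p-E+1}(z_1, …, z_E)`. -/

open Function

section CompleteHomogeneous

variable {R : Type*} [CommSemiring R]

def completeHomogeneous (E m : ℕ) (z : Fin E → R) : R :=
  ∑ μ ∈ Nat.antidiagonalTuple E m, ∏ i, z i ^ μ i

theorem sum_prod_pow_eq_completeHomogeneous_mul_prod {k n : ℕ} (hkn : k ≤ n) (z : Fin k → R) :
    ∑ ν ∈ (Fintype.piFinset fun _ : Fin k => Icc 1 n).filter (fun ν => ∑ e, ν e = n),
      ∏ e, z e ^ ν e = completeHomogeneous k (n - k) z * ∏ e, z e := by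
  rw [completeHomogeneous, sum_mul, eq_comm]
  refine sum_nbij' (fun μ e => μ e + 1) (fun ν e => ν e - 1) ?_ ?_ ?_ ?_ ?_
  · intro μ hμ
    rw [Nat.mem_antidiagonalTuple] at hμ
    have hle (e : Fin k) : μ e ≤ n - k :=
      hμ ▸ single_le_sum (fun _ _ => Nat.zero_le _) (mem_univ e)
    simp only [mem_filter, Fintype.mem_piFinset, mem_Icc, sum_add_distrib, hμ, sum_const,
      card_univ, Fintype.card_fin, smul_eq_mul, mul_one]
    exact ⟨fun e => ⟨by omega, by have := hle e; have := e.pos; omega⟩, by omega⟩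
  · intro ν hν
    simp only [mem_filter, Fintype.mem_piFinset, mem_Icc] at hν
    rw [Nat.mem_antidiagonalTuple, sum_tsub_distrib _ fun e _ => (hν.1 e).1, hν.2]
    simp
  · intro μ _
    simp
  · intro ν hν
    simp only [mem_filter, Fintype.mem_piFinset, mem_Icc] at hν
    funext e
    exact Nat.sub_add_cancel (hν.1 e).1
  · intro μ _
    simp only [← prod_mul_distrib, pow_succ]

theorem completeHomogeneous_one (m : ℕ) (z : Fin 1 → R) :
    completeHomogeneous 1 m z = z 0 ^ m := by
  simp [completeHomogeneous, Nat.antidiagonalTuple_one]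

theorem completeHomogeneous_succ (E m : ℕ) (z : Fin (E + 1) → R) :
    completeHomogeneous (E + 1) m z =
      ∑ p ∈ antidiagonal m, z 0 ^ p.1 * completeHomogeneous E p.2 (Fin.tail z) := by
  simp only [completeHomogeneous, mul_sum]
  rw [sum_sigma']
  refine sum_nbij' (fun μ => ⟨(μ 0, m - μ 0), Fin.tail μ⟩) (fun p => Fin.cons p.1.1 p.2)
    ?_ ?_ (fun μ _ => Fin.cons_self_tail μ) ?_ ?_
  · intro μ hμ
    rw [Nat.mem_antidiagonalTuple, Fin.sum_univ_succ] at hμ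
    simp only [mem_sigma, HasAntidiagonal.mem_antidiagonal, Nat.mem_antidiagonalTuple, Fin.tail]
    omega
  · rintro ⟨⟨a, b⟩, ν⟩ hp
    simp only [mem_sigma, HasAntidiagonal.mem_antidiagonal, Nat.mem_antidiagonalTuple] at hp
    simp only [Nat.mem_antidiagonalTuple, Fin.sum_cons]
    omega
  · rintro ⟨⟨a, b⟩, ν⟩ hp
    simp only [mem_sigma, HasAntidiagonal.mem_antidiagonal] at hp
    simp [← hp.1]
  · intro μ _
    simp [Fin.prod_univ_succ, Fin.tail]

theorem completeHomogeneous_succ_succ (E m : ℕ) (z : Fin (E + 1) → R) :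
    completeHomogeneous (E + 1) (m + 1) z =
      z 0 * completeHomogeneous (E + 1) m z + completeHomogeneous E (m + 1) (Fin.tail z) := by
  rw [completeHomogeneous_succ, Nat.sum_antidiagonal_succ, completeHomogeneous_succ, mul_sum,
    add_comm]
  simp [pow_succ', mul_assoc]

theorem completeHomogeneous_comp_rev (E m : ℕ) (z : Fin E → R) :
    completeHomogeneous E m (z ∘ Fin.rev) = completeHomogeneous E m z := by
  refine sum_nbij' (· ∘ Fin.rev) (· ∘ Fin.rev) ?_ ?_ (by simp [comp_def]) (by simp [comp_def])
    fun μ _ => Fintype.prod_equiv Fin.revPerm _ _ fun i => by simp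
  all_goals simp [Nat.mem_antidiagonalTuple, Fintype.sum_equiv Fin.revPerm]

-- `h_m` is symmetric, so reversing the variables turns the expansion in the first variable
-- into the expansion in the last one.
theorem completeHomogeneous_succ_succ' (E m : ℕ) (z : Fin (E + 1) → R) :
    completeHomogeneous (E + 1) (m + 1) z =
      z (Fin.last E) * completeHomogeneous (E + 1) m z +
        completeHomogeneous E (m + 1) (Fin.init z) := by
  have hrev : Fin.tail (z ∘ Fin.rev) = Fin.init z ∘ Fin.rev := by
    funext i; simp [Fin.tail, Fin.init, Fin.rev_succ]
  simpa [completeHomogeneous_comp_rev, hrev] using completeHomogeneous_succ_succ E m (z ∘ Fin.rev)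

end CompleteHomogeneous

theorem completeHomogeneous_init_sub_tail {R : Type*} [CommRing R] (E m : ℕ)
    (z : Fin (E + 1) → R) :
    completeHomogeneous E (m + 1) (Fin.init z) - completeHomogeneous E (m + 1) (Fin.tail z) =
      (z 0 - z (Fin.last E)) * completeHomogeneous (E + 1) m z := by
  linear_combination completeHomogeneous_succ_succ E m z - completeHomogeneous_succ_succ' E m z

theorem dividedDiff_pow_eq_completeHomogeneous {K : Type*} [Field K] {k p : ℕ} (hkp : k ≤ p)
    {z : Fin (k + 1) → K} (hz : Injective z) :
    dividedDiff (fun w => w ^ p) k z = completeHomogeneous (k + 1) (p - k) z := by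
  induction k with
  | zero => simp [dividedDiff, completeHomogeneous_one]
  | succ k ih =>
    have hne : z 0 - z (Fin.last (k + 1)) ≠ 0 :=
      sub_ne_zero.2 (hz.ne Fin.last_pos.ne)
    rw [dividedDiff,
      ih (z := fun i => z i.castSucc) (by omega) (hz.comp (Fin.castSucc_injective _)),
      ih (z := fun i => z i.succ) (by omega) (hz.comp (Fin.succ_injective _)),
      show p - k = p - (k + 1) + 1 by omega, div_eq_iff hne, mul_comm]
    exact completeHomogeneous_init_sub_tail _ _ z

/-- For pairwise distinct complex numbers `z 1, …, z E` (`E = k+1`) and `n ≥ E`: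
`Σ_{n_1+⋯+n_E = n, n_e ≥ 1} Π_e z_e^{n_e} = m_{n−1}[z_1,…,z_E]·Π_e z_e`
where `m_{n−1}(z) = z^{n−1}`. -/
theorem sum_monomials_simplex_eq_dividedDiff (k n : ℕ) (hn : k + 1 ≤ n)
    (z : Fin (k + 1) → ℂ) (hz : Function.Injective z) :
    ∑ ν ∈ (Fintype.piFinset fun _ : Fin (k + 1) => Finset.Icc 1 n).filter
        (fun ν => ∑ e, ν e = n),
      ∏ e, z e ^ ν e
      = dividedDiff (fun w => w ^ (n - 1)) k z * ∏ e, z e := by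
  rw [sum_prod_pow_eq_completeHomogeneous_mul_prod hn,
    dividedDiff_pow_eq_completeHomogeneous (by omega) hz, show n - 1 - k = n - (k + 1) by omega]
end

section
/- Let ε > 0, and let φ: ℝ → ℝ≥0 be a function with Σ_{n≥1} φ(nε) < ∞. Define S_ε(z) = Σ_{n≥1} φ(nε) z^{n−1} for |z| ≤ 1. Then for any pairwise distinct z_1, …, z_E in the open unit disk, Σ over all tuples (n_1,…,n_E) of positive integers of φ((n_1+⋯+n_E)ε)·Π_e z_e^{n_e} = S_ε[z_1, …, z_E]·Π_e z_e, where the bracket denotes the divided difference. -/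
open Finset

/-- `S_ε(z) = Σ_{n ≥ 1} φ(nε) z^{n−1}`. -/
noncomputable def Seps (φ : ℝ → ℝ) (ε : ℝ) (z : ℂ) : ℂ :=
  ∑' n : ℕ, (φ ((n + 1) * ε) : ℂ) * z ^ n

private lemma insertNth_sum {E : ℕ} (p : Fin (E + 1)) (a : ℕ) (m : Fin E → ℕ) :
    (∑ e, Fin.insertNth p a m e) = a + ∑ e, m e := by
  rw [Fin.sum_univ_succAbove (Fin.insertNth p a m) p]
  simp

private lemma insertNth_prod {M : Type*} [CommMonoid M] {E : ℕ} (z : Fin (E + 1) → M)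
    (p : Fin (E + 1)) (a : ℕ) (m : Fin E → ℕ) :
    (∏ e, z e ^ Fin.insertNth p a m e) = z p ^ a * ∏ e, z (p.succAbove e) ^ m e := by
  have h : (∏ e, z e ^ Fin.insertNth p a m e)
      = z p ^ Fin.insertNth (α := fun _ => ℕ) p a m p
        * ∏ e : Fin E, z (p.succAbove e) ^ Fin.insertNth (α := fun _ => ℕ) p a m (p.succAbove e) :=
    Fin.prod_univ_succAbove _ p
  rw [h]
  simp

/-- Summability of the multi-geometric series. -/
private lemma summable_geom_pi : ∀ (E : ℕ) (r : Fin E → ℝ), (∀ e, 0 ≤ r e) → (∀ e, r e < 1) →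
    Summable (fun m : Fin E → ℕ => ∏ e, r e ^ m e)
  | 0, r, _, _ => by
      have : (fun m : Fin 0 → ℕ => ∏ e, r e ^ m e) = fun _ => 1 := by
        funext m; simp
      rw [this]
      exact summable_of_finite_support (Set.toFinite _)
  | E + 1, r, h0, h1 => by
      have hrec := summable_geom_pi E (fun e => r ((0 : Fin (E+1)).succAbove e))
        (fun e => h0 _) (fun e => h1 _)
      have hgeo : Summable (fun n : ℕ => r 0 ^ n) :=
        summable_geometric_of_lt_one (h0 0) (h1 0)
      have hmul := hgeo.mul_of_nonneg hrec
        (fun n => pow_nonneg (h0 0) n)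
        (fun m => Finset.prod_nonneg fun e _ => pow_nonneg (h0 _) _)
      refine ((Fin.insertNthEquiv (fun _ => ℕ) 0).summable_iff
        (f := fun m : Fin (E+1) → ℕ => ∏ e, r e ^ m e)).mp (hmul.congr ?_)
      rintro ⟨a, m⟩
      have : (Fin.insertNthEquiv (fun _ => ℕ) (0 : Fin (E + 1))) (a, m)
          = Fin.insertNth 0 a m := rfl
      simp only [Function.comp, this, insertNth_prod]

private lemma summable_main {c : ℕ → ℂ} {C : ℝ} (hc : ∀ n, ‖c n‖ ≤ C) {E : ℕ}
    {z : Fin E → ℂ} (hz1 : ∀ e, ‖z e‖ < 1) :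
    Summable (fun m : Fin E → ℕ => c (∑ e, m e) * ∏ e, z e ^ m e) := by
  apply Summable.of_norm_bounded (g := fun m : Fin E → ℕ => C * ∏ e, ‖z e‖ ^ m e)
  · exact ((summable_geom_pi E _ (fun e => norm_nonneg _) hz1)).mul_left C
  · intro m
    rw [norm_mul]
    have h1 : ‖∏ e, z e ^ m e‖ = ∏ e, ‖z e‖ ^ m e := by
      rw [norm_prod]; simp [norm_pow]
    rw [h1]
    exact mul_le_mul_of_nonneg_right (hc _)
      (Finset.prod_nonneg fun e _ => pow_nonneg (norm_nonneg _) _)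

private lemma A_reindex (c : ℕ → ℂ) {E : ℕ} (z : Fin (E + 1) → ℂ) (p : Fin (E + 1)) :
    (∑' m : Fin (E + 1) → ℕ, c (∑ e, m e) * ∏ e, z e ^ m e)
      = ∑' q : ℕ × (Fin E → ℕ),
          c (q.1 + ∑ e, q.2 e) * (z p ^ q.1 * ∏ e, z (p.succAbove e) ^ q.2 e) := by
  rw [← Equiv.tsum_eq (Fin.insertNthEquiv (fun _ => ℕ) p)
    (fun m : Fin (E+1) → ℕ => c (∑ e, m e) * ∏ e, z e ^ m e)]
  apply tsum_congr
  rintro ⟨a, m⟩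
  have hx : (Fin.insertNthEquiv (fun _ => ℕ) p) (a, m) = Fin.insertNth p a m := rfl
  simp only [hx, insertNth_sum, insertNth_prod]

private lemma summable_F {c : ℕ → ℂ} {C : ℝ} (hc : ∀ n, ‖c n‖ ≤ C) {E : ℕ}
    {z : Fin (E + 1) → ℂ} (hz1 : ∀ e, ‖z e‖ < 1) (p : Fin (E + 1)) :
    Summable (fun q : ℕ × (Fin E → ℕ) =>
      c (q.1 + ∑ e, q.2 e) * (z p ^ q.1 * ∏ e, z (p.succAbove e) ^ q.2 e)) := by
  have h2 := ((Fin.insertNthEquiv (fun _ => ℕ) p).summable_iff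
    (f := fun m : Fin (E+1) → ℕ => c (∑ e, m e) * ∏ e, z e ^ m e)).mpr
    (summable_main hc hz1)
  apply h2.congr
  rintro ⟨a, m⟩
  have hx : (Fin.insertNthEquiv (fun _ => ℕ) p) (a, m) = Fin.insertNth p a m := rfl
  simp only [Function.comp, hx, insertNth_sum, insertNth_prod]

private lemma A_split {c : ℕ → ℂ} {C : ℝ} (hc : ∀ n, ‖c n‖ ≤ C) {E : ℕ}
    (z : Fin (E + 1) → ℂ) (hz1 : ∀ e, ‖z e‖ < 1) (p : Fin (E + 1)) :
    (∑' m : Fin (E + 1) → ℕ, c (∑ e, m e) * ∏ e, z e ^ m e)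
      = (∑' m : Fin E → ℕ, c (∑ e, m e) * ∏ e, z (p.succAbove e) ^ m e)
        + z p * ∑' m : Fin (E + 1) → ℕ, c ((∑ e, m e) + 1) * ∏ e, z e ^ m e := by
  have hc' : ∀ n, ‖(fun n => c (n + 1)) n‖ ≤ C := fun n => hc _
  set F : ℕ × (Fin E → ℕ) → ℂ :=
    fun q => c (q.1 + ∑ e, q.2 e) * (z p ^ q.1 * ∏ e, z (p.succAbove e) ^ q.2 e) with hFdef
  set F' : ℕ × (Fin E → ℕ) → ℂ :=
    fun q => c (q.1 + ∑ e, q.2 e + 1) * (z p ^ q.1 * ∏ e, z (p.succAbove e) ^ q.2 e) with hF'def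
  have hF : Summable F := summable_F hc hz1 p
  have hF' : Summable F' := by
    have := summable_F hc' hz1 p
    exact this.congr fun q => rfl
  rw [A_reindex c z p, A_reindex (fun n => c (n + 1)) z p]
  have houter : Summable (fun a : ℕ => ∑' m : Fin E → ℕ, F (a, m)) :=
    ⟨_, hF.hasSum.prod_fiberwise fun b => (hF.prod_factor b).hasSum⟩
  have h1 : ∑' q, F q = (∑' m : Fin E → ℕ, F (0, m)) + ∑' a, ∑' m : Fin E → ℕ, F (a + 1, m) := by
    rw [Summable.tsum_prod' hF fun b => hF.prod_factor b]
    exact Summable.tsum_eq_zero_add houter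
  have h2 : ∀ a m, F (a + 1, m) = z p * F' (a, m) := by
    intro a m
    simp only [hFdef, hF'def, pow_succ]
    rw [Nat.add_right_comm a 1 (∑ e, m e)]
    ring
  rw [h1]
  congr 1
  · apply tsum_congr; intro m; simp [hFdef]
  · rw [Summable.tsum_prod' hF' fun b => hF'.prod_factor b]
    rw [← tsum_mul_left]
    apply tsum_congr; intro a
    rw [← tsum_mul_left]
    apply tsum_congr; intro m
    exact h2 a m

private lemma A_diff {c : ℕ → ℂ} {C : ℝ} (hc : ∀ n, ‖c n‖ ≤ C) {E : ℕ}
    (z : Fin (E + 2) → ℂ) (hz1 : ∀ e, ‖z e‖ < 1) :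
    (∑' m : Fin (E + 1) → ℕ, c (∑ e, m e) * ∏ e, z e.castSucc ^ m e)
      - (∑' m : Fin (E + 1) → ℕ, c (∑ e, m e) * ∏ e, z e.succ ^ m e)
      = (z 0 - z (Fin.last (E + 1)))
        * ∑' m : Fin (E + 2) → ℕ, c ((∑ e, m e) + 1) * ∏ e, z e ^ m e := by
  have e1 := A_split hc z hz1 (Fin.last (E + 1))
  have e2 := A_split hc z hz1 0
  simp only [Fin.succAbove_last, Fin.succAbove_zero] at e1 e2
  linear_combination e2 - e1

private lemma dd_eq (φ : ℝ → ℝ) (hφ : ∀ t, 0 ≤ φ t) (ε : ℝ)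
    (hsum : Summable fun n : ℕ => φ ((n + 1) * ε)) :
    ∀ (E : ℕ) (z : Fin (E + 1) → ℂ), Function.Injective z → (∀ e, ‖z e‖ < 1) →
    dividedDiff (Seps φ ε) E z
      = ∑' m : Fin (E + 1) → ℕ,
          (φ (((∑ e, m e : ℕ) + E + 1) * ε) : ℂ) * ∏ e, z e ^ m e := by
  have hbound : ∀ E n : ℕ, ‖((φ (((n : ℝ) + E + 1) * ε)) : ℂ)‖ ≤ ∑' j : ℕ, φ ((j + 1) * ε) := by
    intro E n
    rw [Complex.norm_real, Real.norm_of_nonneg (hφ _)]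
    have : ((n : ℝ) + E + 1) * ε = (((n + E : ℕ) : ℝ) + 1) * ε := by push_cast; ring
    rw [this]
    exact Summable.le_tsum hsum (n + E) fun j _ => hφ _
  intro E
  induction E with
  | zero =>
    intro z _ hz1
    show Seps φ ε (z 0) = _
    rw [Seps, ← Equiv.tsum_eq (Equiv.funUnique (Fin 1) ℕ).symm
      (fun m : Fin 1 → ℕ => (φ (((∑ e, m e : ℕ) + (0:ℕ) + 1) * ε) : ℂ) * ∏ e, z e ^ m e)]
    apply tsum_congr; intro n
    simp only [Equiv.funUnique_symm_apply, Function.const]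
    rw [Fin.sum_univ_one, Fin.prod_univ_one]
    norm_num
  | succ E ih =>
    intro z hinj hz1
    have h0l : z 0 ≠ z (Fin.last (E + 1)) := by
      intro h
      have := hinj h
      simp [Fin.ext_iff] at this
    show (dividedDiff (Seps φ ε) E (fun i => z i.castSucc)
        - dividedDiff (Seps φ ε) E (fun i => z i.succ)) / (z 0 - z (Fin.last (E + 1))) = _
    rw [ih (fun i => z i.castSucc) (hinj.comp (Fin.castSucc_injective _)) (fun e => hz1 _),
      ih (fun i => z i.succ) (hinj.comp (Fin.succ_injective _)) (fun e => hz1 _)]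
    rw [A_diff (hbound E) z hz1, mul_div_cancel_left₀ _ (sub_ne_zero.mpr h0l)]
    apply tsum_congr; intro m
    have harg : ((((∑ e, m e) + 1 : ℕ) : ℝ) + E + 1)
        = (((∑ e, m e : ℕ) : ℝ) + ((E + 1 : ℕ) : ℝ) + 1) := by push_cast; ring
    rw [harg]

/-- For `φ ≥ 0` with `Σ_{n≥1} φ(nε) < ∞` and pairwise distinct points `z_e` in the
open unit disk, the sum over all tuples of positive integers of
`φ((n_1+⋯+n_E)ε)·Π z_e^{n_e}` equals `S_ε[z_1,…,z_E]·Π z_e`. -/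
theorem tsum_phi_monomials_eq_dividedDiff_Seps (φ : ℝ → ℝ) (hφ : ∀ t, 0 ≤ φ t)
    (ε : ℝ) (hε : 0 < ε) (hsum : Summable fun n : ℕ => φ ((n + 1) * ε))
    (k : ℕ) (z : Fin (k + 1) → ℂ) (hz : Function.Injective z)
    (hz1 : ∀ e, ‖z e‖ < 1) :
    ∑' ν : Fin (k + 1) → ℕ+,
        (φ ((∑ e, (ν e : ℕ)) * ε) : ℂ) * ∏ e, z e ^ (ν e : ℕ)
      = dividedDiff (Seps φ ε) k z * ∏ e, z e := by
  rw [dd_eq φ hφ ε hsum k z hz hz1, ← tsum_mul_right]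
  rw [← Equiv.tsum_eq (Equiv.piCongrRight (fun _ : Fin (k + 1) => Equiv.pnatEquivNat.symm))
    (fun ν : Fin (k + 1) → ℕ+ => (φ ((∑ e, (ν e : ℕ)) * ε) : ℂ) * ∏ e, z e ^ (ν e : ℕ))]
  apply tsum_congr; intro m
  have hA : ∀ n : ℕ, ((Equiv.pnatEquivNat.symm n : ℕ+) : ℕ) = n + 1 := fun n => rfl
  simp only [Equiv.piCongrRight_apply, Pi.map_apply, hA]
  have hsum' : (∑ e, (m e + 1)) = (∑ e, m e) + (k + 1) := by
    rw [Finset.sum_add_distrib]; simp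
  have hprod : (∏ e, z e ^ (m e + 1)) = (∏ e, z e ^ m e) * ∏ e, z e := by
    rw [← Finset.prod_mul_distrib]
    exact Finset.prod_congr rfl fun e _ => pow_succ _ _
  have harg : ((((∑ e, m e) + (k + 1) : ℕ)) : ℝ) = ((∑ e, m e : ℕ) : ℝ) + k + 1 := by
    push_cast; ring
  rw [hsum', hprod, harg, ← mul_assoc]
end
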